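/- Under the assumptions of the congested transport problem (H convex, nondecreasing, differentiable on ℝ₊, H(0)=0, with a z^q ≤ H(z) ≤ b(z^q+1) and 0 ≤ H'(z) ≤ c(z^{q-1}+1)), a measure Q̄ ∈ Q^q(μ₀,μ₁) minimizes Q ↦ ∫_Ω H(i_Q) if and only if, setting ξ̄ := H'(i_{Q̄}) ∈ L^{q*}, one has ∫_Ω ξ̄ i_{Q̄} = inf { ∫_Ω ξ̄ i_Q : Q ∈ Q^q(μ₀,μ₁) }. -/

import Mathlib

open MeasureTheory Set Filter Topology
noncomputable section

abbrev E2 : Type := EuclideanSpace ℝ (Fin 2)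
abbrev Curves : Type := C(ℝ, E2)
instance : MeasurableSpace Curves := borel Curves
instance : BorelSpace Curves := ⟨rfl⟩

/-- Weighted length `L_φ(σ) = ∫₀¹ φ(σ(t)) |σ'(t)| dt`. -/
def Lw (φ : E2 → ℝ) (σ : ℝ → E2) : ℝ := ∫ t in (0:ℝ)..1, φ (σ t) * ‖deriv σ t‖

/-- Length of a curve. -/
def len (σ : ℝ → E2) : ℝ := ∫ t in (0:ℝ)..1, ‖deriv σ t‖

/-- A Lipschitz curve valued in `Ωb`. -/
def IsCurveIn (Ωb : Set E2) (σ : ℝ → E2) : Prop :=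
  (∃ K : NNReal, LipschitzOnWith K σ (Icc 0 1)) ∧ ∀ t ∈ Icc (0:ℝ) 1, σ t ∈ Ωb

/-- `ι` is the traffic intensity of `Q`. -/
def IsIntensity (Q : Measure Curves) (ι : Measure E2) : Prop :=
  ∀ φ : C(E2, ℝ), ∫ x, φ x ∂ι = ∫ σ, Lw φ (⇑σ) ∂Q

/-- Geodesic cost associated to a metric `ξ`. -/
def cost (Ωb : Set E2) (ξ : E2 → ℝ) (x y : E2) : ℝ :=
  sInf {v : ℝ | ∃ σ : ℝ → E2, IsCurveIn Ωb σ ∧ σ 0 = x ∧ σ 1 = y ∧ v = Lw ξ σ}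

/-- `ξₙ → ξ` in `L^p(Ω)`. -/
def LqTendsto (Ω : Set E2) (p : ℝ) (ξn : ℕ → E2 → ℝ) (ξ : E2 → ℝ) : Prop :=
  Tendsto (fun n => eLpNorm (fun x => ξn n x - ξ x) (ENNReal.ofReal p) (volume.restrict Ω))
    atTop (𝓝 0)

/-- The set `A(ξ)` of uniform limits of costs along approximating sequences. -/
def relLimits (Ω : Set E2) (p : ℝ) (ξ : E2 → ℝ) : Set (E2 × E2 → ℝ) :=
  {c | ∃ ξn : ℕ → C(E2, ℝ), (∀ n x, 0 ≤ ξn n x) ∧ LqTendsto Ω p (fun n x => ξn n x) ξ ∧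
    TendstoUniformlyOn (fun n z => cost (closure Ω) (⇑(ξn n)) z.1 z.2) c atTop
      (closure Ω ×ˢ closure Ω)}

/-- Relaxed geodesic cost `c̄_ξ`. -/
def cbar (Ω : Set E2) (p : ℝ) (ξ : E2 → ℝ) (x y : E2) : ℝ :=
  sSup {v : ℝ | ∃ c ∈ relLimits Ω p ξ, v = c (x, y)}

/-- Membership in `Q^q(μ₀,μ₁)` with density witness `f` for the traffic intensity. -/
def InQq (Ω : Set E2) (μ0 μ1 : Measure E2) (q : ℝ) (Q : Measure Curves) (f : E2 → ℝ) : Prop :=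
  IsProbabilityMeasure Q ∧
  Q {σ : Curves | IsCurveIn (closure Ω) ⇑σ} = 1 ∧
  Q.map (fun σ : Curves => σ 0) = μ0 ∧ Q.map (fun σ : Curves => σ 1) = μ1 ∧
  MemLp f (ENNReal.ofReal q) (volume.restrict Ω) ∧
  (∀ᵐ x ∂(volume.restrict Ω), 0 ≤ f x) ∧
  ∀ φ : C(E2, ℝ), ∫ x in Ω, φ x * f x = ∫ σ, Lw φ (⇑σ) ∂Q

/-- The `L¹(C,Q)` extension of the weighted length to an `L^{q*}` metric `ξ`. -/
def IsLext (Ω : Set E2) (p : ℝ) (ξ : E2 → ℝ) (Q : Measure Curves) (Lext : Curves → ℝ) : Prop :=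
  ∀ ξn : ℕ → C(E2, ℝ), (∀ n x, 0 ≤ ξn n x) → LqTendsto Ω p (fun n x => ξn n x) ξ →
    Tendsto (fun n => ∫ σ, |Lw (⇑(ξn n)) ⇑σ - Lext σ| ∂Q) atTop (𝓝 0)

/-- Legendre–Fenchel transform of `H` on `ℝ₊`. -/
def Hstar (H : ℝ → ℝ) (w : ℝ) : ℝ := sSup {v : ℝ | ∃ z : ℝ, 0 ≤ z ∧ v = z * w - H z}

/-!
(⇐) is the gradient inequality `H w ≥ H z + H'(z) (w - z)` of the convex `H`, integrated with
`z = f̄`, `w = f`. (⇒) The mixture `(1 - ε) Q̄ + ε Q` is again admissible, with intensity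
`(1 - ε) f̄ + ε f`, so minimality makes the difference quotients of `ε ↦ ∫ H((1 - ε) f̄ + ε f)` at
`0` nonnegative. By convexity these quotients decrease, as `ε ↓ 0`, to `H'(f̄) (f - f̄)`, and
monotone convergence gives the variational inequality.

Mixing requires both plans to give curves of integrable length. A plan `Q` for which `len` is not
`Q`-integrable has intensity `0`, because the junk value `∫ len ∂Q = 0` enters the defining
identity of `InQq` with `φ = 1`; minimality against such a plan forces `f̄ = 0`, where the
inequality is trivial.
-/

section SegmentSlope

variable {H : ℝ → ℝ} {z w : ℝ}

lemma convexOn_comp_lineMap (hH : ConvexOn ℝ (Ici 0) H) (hz : 0 ≤ z) (hw : 0 ≤ w) :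
    ConvexOn ℝ (Icc 0 1) (H ∘ AffineMap.lineMap (k := ℝ) z w) :=
  (hH.comp_affineMap (AffineMap.lineMap (k := ℝ) z w)).subset
    (fun _ hε => (convex_Ici 0).lineMap_mem (mem_Ici.2 hz) (mem_Ici.2 hw) hε) (convex_Icc 0 1)

lemma hasDerivAt_comp_lineMap (hH : DifferentiableAt ℝ H z) :
    HasDerivAt (H ∘ AffineMap.lineMap (k := ℝ) z w) (deriv H z * (w - z)) 0 := by
  have hH' : HasDerivAt H (deriv H z) (AffineMap.lineMap (k := ℝ) z w (0 : ℝ)) := by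
    simpa using hH.hasDerivAt
  exact hH'.comp (0 : ℝ) AffineMap.hasDerivAt_lineMap

lemma slope_comp_lineMap_zero (ε : ℝ) :
    slope (H ∘ AffineMap.lineMap (k := ℝ) z w) 0 ε = ε⁻¹ * (H ((1 - ε) * z + ε * w) - H z) := by
  simp [slope_def_field, AffineMap.lineMap_apply_module, div_eq_inv_mul]

lemma monotoneOn_slope_comp_lineMap (hH : ConvexOn ℝ (Ici 0) H) (hz : 0 ≤ z) (hw : 0 ≤ w) :
    MonotoneOn (slope (H ∘ AffineMap.lineMap (k := ℝ) z w) 0) (Ioc 0 1) :=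
  ((convexOn_comp_lineMap hH hz hw).slope_mono (left_mem_Icc.2 zero_le_one)).mono
    fun _ hε => ⟨Ioc_subset_Icc_self hε, hε.1.ne'⟩

lemma deriv_mul_sub_le_slope_comp_lineMap (hH : ConvexOn ℝ (Ici 0) H)
    (hHz : DifferentiableAt ℝ H z) (hz : 0 ≤ z) (hw : 0 ≤ w) {ε : ℝ} (hε : ε ∈ Ioc 0 1) :
    deriv H z * (w - z) ≤ slope (H ∘ AffineMap.lineMap (k := ℝ) z w) 0 ε :=
  (convexOn_comp_lineMap hH hz hw).le_slope_of_hasDerivAt (left_mem_Icc.2 zero_le_one)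
    (Ioc_subset_Icc_self hε) hε.1 (hasDerivAt_comp_lineMap hHz)

lemma add_deriv_mul_sub_le (hH : ConvexOn ℝ (Ici 0) H) (hHz : DifferentiableAt ℝ H z)
    (hz : 0 ≤ z) (hw : 0 ≤ w) : H z + deriv H z * (w - z) ≤ H w := by
  have h := deriv_mul_sub_le_slope_comp_lineMap hH hHz hz hw (right_mem_Ioc.2 zero_lt_one)
  rw [slope_comp_lineMap_zero] at h
  norm_num at h
  linarith

lemma tendsto_slope_comp_lineMap (hHz : DifferentiableAt ℝ H z) :
    Tendsto (slope (H ∘ AffineMap.lineMap (k := ℝ) z w) 0) (𝓝[>] 0) (𝓝 (deriv H z * (w - z))) :=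
  (hasDerivAt_iff_tendsto_slope.1 (hasDerivAt_comp_lineMap hHz)).mono_left
    (nhdsWithin_mono _ fun _ h => ne_of_gt h)

end SegmentSlope

section FirstOrderCondition

variable {α : Type*} [MeasurableSpace α] {μ : Measure α} {H : ℝ → ℝ} {f₀ f : α → ℝ}

lemma integral_deriv_mul_le_of_forall_integral_le (hH : ConvexOn ℝ (Ici 0) H)
    (hHd : ∀ z, 0 ≤ z → DifferentiableAt ℝ H z) (hf₀ : 0 ≤ᵐ[μ] f₀) (hf : 0 ≤ᵐ[μ] f)
    (hint : ∀ ε ∈ Icc (0 : ℝ) 1, Integrable (fun x => H ((1 - ε) * f₀ x + ε * f x)) μ)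
    (hf₀' : Integrable (fun x => deriv H (f₀ x) * f₀ x) μ)
    (hf' : Integrable (fun x => deriv H (f₀ x) * f x) μ)
    (hmin : ∀ ε ∈ Ioc (0 : ℝ) 1, ∫ x, H (f₀ x) ∂μ ≤ ∫ x, H ((1 - ε) * f₀ x + ε * f x) ∂μ) :
    ∫ x, deriv H (f₀ x) * f₀ x ∂μ ≤ ∫ x, deriv H (f₀ x) * f x ∂μ := by
  set ε : ℕ → ℝ := fun n => 1 / ((n : ℝ) + 1)
  have hε : ∀ n, ε n ∈ Ioc 0 1 := fun n =>
    ⟨Nat.one_div_pos_of_nat, div_le_one_of_le₀ (by simp) (by positivity)⟩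
  have hε_anti : Antitone ε := fun m n hmn => Nat.one_div_le_one_div hmn
  have hε_lim : Tendsto ε atTop (𝓝[>] 0) :=
    tendsto_nhdsWithin_iff.2 ⟨tendsto_one_div_add_atTop_nhds_zero_nat,
      Eventually.of_forall fun n => (hε n).1⟩
  set u : ℕ → α → ℝ := fun n x => slope (H ∘ AffineMap.lineMap (k := ℝ) (f₀ x) (f x)) 0 (ε n)
  have hHf₀ : Integrable (fun x => H (f₀ x)) μ := by simpa using hint 0 (left_mem_Icc.2 zero_le_one)
  have hu_eq : ∀ n, u n = fun x => (ε n)⁻¹ * (H ((1 - ε n) * f₀ x + ε n * f x) - H (f₀ x)) :=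
    fun n => funext fun x => slope_comp_lineMap_zero (ε n)
  have hu_int : ∀ n, Integrable (u n) μ := fun n => by
    rw [hu_eq]
    exact ((hint _ (Ioc_subset_Icc_self (hε n))).sub hHf₀).const_mul _
  have hu_nonneg : ∀ n, 0 ≤ ∫ x, u n x ∂μ := fun n => by
    rw [hu_eq, integral_const_mul, integral_sub (hint _ (Ioc_subset_Icc_self (hε n))) hHf₀]
    exact mul_nonneg (inv_nonneg.2 (hε n).1.le) (sub_nonneg.2 (hmin _ (hε n)))
  have hlim : Tendsto (fun n => ∫ x, u n x ∂μ) atTop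
      (𝓝 (∫ x, deriv H (f₀ x) * (f x - f₀ x) ∂μ)) := by
    refine integral_tendsto_of_tendsto_of_antitone hu_int ?_ ?_ ?_
    · exact (hf'.sub hf₀').congr (.of_forall fun x => (mul_sub _ _ _).symm)
    · filter_upwards [hf₀, hf] with x hx₀ hx m n hmn
      exact monotoneOn_slope_comp_lineMap hH hx₀ hx (hε n) (hε m) (hε_anti hmn)
    · filter_upwards [hf₀] with x hx₀
      exact (tendsto_slope_comp_lineMap (hHd _ hx₀)).comp hε_lim
  have h := ge_of_tendsto' hlim hu_nonneg
  simp only [mul_sub] at h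
  rw [integral_sub hf' hf₀'] at h
  linarith

lemma integral_le_of_integral_deriv_mul_le (hH : ConvexOn ℝ (Ici 0) H)
    (hHd : ∀ z, 0 ≤ z → DifferentiableAt ℝ H z) (hf₀ : 0 ≤ᵐ[μ] f₀) (hf : 0 ≤ᵐ[μ] f)
    (hHf₀ : Integrable (fun x => H (f₀ x)) μ) (hHf : Integrable (fun x => H (f x)) μ)
    (hf₀' : Integrable (fun x => deriv H (f₀ x) * f₀ x) μ)
    (hf' : Integrable (fun x => deriv H (f₀ x) * f x) μ)
    (h : ∫ x, deriv H (f₀ x) * f₀ x ∂μ ≤ ∫ x, deriv H (f₀ x) * f x ∂μ) :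
    ∫ x, H (f₀ x) ∂μ ≤ ∫ x, H (f x) ∂μ :=
  calc ∫ x, H (f₀ x) ∂μ
      ≤ ∫ x, H (f₀ x) ∂μ + (∫ x, deriv H (f₀ x) * f x ∂μ - ∫ x, deriv H (f₀ x) * f₀ x ∂μ) := by
        linarith
    _ = ∫ x, H (f₀ x) + (deriv H (f₀ x) * f x - deriv H (f₀ x) * f₀ x) ∂μ := by
        rw [← integral_sub hf' hf₀']
        exact (integral_add hHf₀ (hf'.sub hf₀')).symm
    _ ≤ ∫ x, H (f x) ∂μ := by
        refine integral_mono_ae (hHf₀.add (hf'.sub hf₀')) hHf ?_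
        filter_upwards [hf₀, hf] with x hx₀ hx
        have := add_deriv_mul_sub_le hH (hHd _ hx₀) hx₀ hx
        linarith

lemma integrable_deriv_comp_mul (hH : ConvexOn ℝ (Ici 0) H)
    (hHd : ∀ z, 0 ≤ z → DifferentiableAt ℝ H z) (hH' : ∀ z, 0 ≤ z → 0 ≤ deriv H z)
    (hf₀ : 0 ≤ᵐ[μ] f₀) (hf : 0 ≤ᵐ[μ] f) (hf₀m : AEMeasurable f₀ μ) (hfm : AEStronglyMeasurable f μ)
    (hHf₀ : Integrable (fun x => H (f₀ x)) μ) (hHf : Integrable (fun x => H (f x)) μ)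
    (hf₀' : Integrable (fun x => deriv H (f₀ x) * f₀ x) μ) :
    Integrable (fun x => deriv H (f₀ x) * f x) μ := by
  refine Integrable.mono' ((hHf.sub hHf₀).add hf₀')
    (((measurable_deriv H).comp_aemeasurable hf₀m).aestronglyMeasurable.mul hfm) ?_
  filter_upwards [hf₀, hf] with x hx₀ hx
  have := add_deriv_mul_sub_le hH (hHd _ hx₀) hx₀ hx
  rw [Real.norm_of_nonneg (mul_nonneg (hH' _ hx₀) hx)]
  simp only [Pi.add_apply, Pi.sub_apply]
  linarith

lemma integral_deriv_mul_le_of_ae_eq_zero (hH' : 0 ≤ deriv H 0) (hf₀ : f₀ =ᵐ[μ] 0)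
    (hf : 0 ≤ᵐ[μ] f) : ∫ x, deriv H (f₀ x) * f₀ x ∂μ ≤ ∫ x, deriv H (f₀ x) * f x ∂μ := by
  rw [integral_eq_zero_of_ae (by filter_upwards [hf₀] with x hx; simp [hx])]
  refine integral_nonneg_of_ae ?_
  filter_upwards [hf₀, hf] with x hx₀ hx
  rw [hx₀]
  exact mul_nonneg hH' hx

lemma ae_eq_zero_of_integral_comp_le {a q : ℝ} (ha : 0 < a)
    (hHa : ∀ z, 0 ≤ z → a * z ^ q ≤ H z) (hH0 : H 0 = 0) (hf₀ : 0 ≤ᵐ[μ] f₀)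
    (hHf₀ : Integrable (fun x => H (f₀ x)) μ) (hf : f =ᵐ[μ] 0)
    (h : ∫ x, H (f₀ x) ∂μ ≤ ∫ x, H (f x) ∂μ) : f₀ =ᵐ[μ] 0 := by
  have hHf₀_nonneg : 0 ≤ᵐ[μ] fun x => H (f₀ x) := by
    filter_upwards [hf₀] with x hx
    exact (mul_nonneg ha.le (Real.rpow_nonneg hx q)).trans (hHa _ hx)
  have hHf : ∫ x, H (f x) ∂μ = 0 :=
    integral_eq_zero_of_ae (by filter_upwards [hf] with x hx; simp [hx, hH0])
  have hHf₀_zero := (integral_eq_zero_iff_of_nonneg_ae hHf₀_nonneg hHf₀).1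
    ((h.trans_eq hHf).antisymm (integral_nonneg_of_ae hHf₀_nonneg))
  filter_upwards [hHf₀_zero, hf₀] with x (hHx : H (f₀ x) = 0) (hx : 0 ≤ f₀ x)
  by_contra hne
  have hpos : 0 < a * f₀ x ^ q := mul_pos ha (Real.rpow_pos_of_pos (hx.lt_of_ne' hne) q)
  exact hpos.not_ge (hHx ▸ hHa _ hx)

end FirstOrderCondition

section GrowthBounds

variable {α : Type*} [MeasurableSpace α] {μ : Measure α} {H : ℝ → ℝ} {q : ℝ} {f : α → ℝ}

lemma ContinuousOn.aestronglyMeasurable_comp_of_ae_nonneg (hH : ContinuousOn H (Ici 0))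
    (hf : AEStronglyMeasurable f μ) (hf0 : 0 ≤ᵐ[μ] f) :
    AEStronglyMeasurable (fun x => H (f x)) μ := by
  have hcont : Continuous fun z => H (max z 0) :=
    hH.comp_continuous (continuous_id.max continuous_const) fun z => le_max_right z 0
  refine (hcont.comp_aestronglyMeasurable hf).congr ?_
  filter_upwards [hf0] with x (hx : 0 ≤ f x)
  simp only [max_eq_left hx]

variable [IsFiniteMeasure μ]

lemma MeasureTheory.MemLp.integrable_rpow_of_nonneg (hq : 0 < q) (hf : MemLp f (ENNReal.ofReal q) μ)
    (hf0 : 0 ≤ᵐ[μ] f) : Integrable (fun x => f x ^ q) μ := by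
  refine hf.integrable_norm_rpow'.congr ?_
  filter_upwards [hf0] with x hx
  rw [ENNReal.toReal_ofReal hq.le, Real.norm_of_nonneg hx]

lemma integrable_comp_of_norm_le_rpow (hq : 0 < q) {b : ℝ} (hH : ContinuousOn H (Ici 0))
    (hHb : ∀ z, 0 ≤ z → ‖H z‖ ≤ b * (z ^ q + 1)) (hf : MemLp f (ENNReal.ofReal q) μ)
    (hf0 : 0 ≤ᵐ[μ] f) : Integrable (fun x => H (f x)) μ := by
  refine Integrable.mono'
    (((hf.integrable_rpow_of_nonneg hq hf0).add (integrable_const 1)).const_mul b)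
    (hH.aestronglyMeasurable_comp_of_ae_nonneg hf.1 hf0) ?_
  filter_upwards [hf0] with x hx
  exact hHb _ hx

lemma integrable_deriv_comp_mul_self (hq : 1 < q) {c : ℝ}
    (hH' : ∀ z, 0 ≤ z → 0 ≤ deriv H z ∧ deriv H z ≤ c * (z ^ (q - 1) + 1))
    (hf : MemLp f (ENNReal.ofReal q) μ) (hf0 : 0 ≤ᵐ[μ] f) :
    Integrable (fun x => deriv H (f x) * f x) μ := by
  have hf1 : Integrable f μ := hf.integrable (by simpa using hq.le)
  refine Integrable.mono' (((hf.integrable_rpow_of_nonneg (by linarith) hf0).add hf1).const_mul c)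
    (((measurable_deriv H).comp_aemeasurable hf.1.aemeasurable).aestronglyMeasurable.mul hf.1) ?_
  filter_upwards [hf0] with x hx
  obtain ⟨h0, hc⟩ := hH' _ hx
  have hpow : f x ^ (q - 1) * f x = f x ^ q := by
    rw [← Real.rpow_add_one' hx (by linarith), sub_add_cancel]
  rw [Real.norm_of_nonneg (mul_nonneg h0 hx)]
  calc deriv H (f x) * f x ≤ c * (f x ^ (q - 1) + 1) * f x := mul_le_mul_of_nonneg_right hc hx
    _ = c * (f x ^ q + f x) := by rw [← hpow]; ring

end GrowthBounds

section Curves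

lemma LipschitzOnWith.intervalIntegrable_norm_deriv {E : Type*} [NormedAddCommGroup E]
    [NormedSpace ℝ E] [CompleteSpace E] {σ : ℝ → E} {K : NNReal} {a b : ℝ} (hab : a ≤ b)
    (hσ : LipschitzOnWith K σ (Icc a b)) :
    IntervalIntegrable (fun t => ‖deriv σ t‖) volume a b := by
  have hIoo : ∀ᵐ t ∂volume.restrict (Ioc a b), t ∈ Ioo a b := by
    rw [← Measure.restrict_congr_set Ioo_ae_eq_Ioc]
    exact ae_restrict_mem measurableSet_Ioo
  refine (intervalIntegrable_iff_integrableOn_Ioc_of_le hab).2 <| Integrable.mono'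
    (integrable_const (K : ℝ)) (stronglyMeasurable_deriv σ).aestronglyMeasurable.norm ?_
  filter_upwards [hIoo] with t ht
  rw [norm_norm]
  exact norm_deriv_le_of_lipschitzOn (Icc_mem_nhds ht.1 ht.2) hσ

lemma IsCurveIn.abs_Lw_le {Ωb : Set E2} {σ : ℝ → E2} (hσ : IsCurveIn Ωb σ) {φ : E2 → ℝ}
    {M : ℝ} (hM : ∀ x ∈ Ωb, |φ x| ≤ M) : |Lw φ σ| ≤ M * len σ := by
  obtain ⟨⟨K, hK⟩, hσΩ⟩ := hσ
  rw [Lw, len, ← intervalIntegral.integral_const_mul, ← Real.norm_eq_abs]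
  refine intervalIntegral.norm_integral_le_of_norm_le zero_le_one (.of_forall fun t ht => ?_)
    ((hK.intervalIntegrable_norm_deriv zero_le_one).const_mul M)
  rw [Real.norm_eq_abs, abs_mul, abs_norm]
  exact mul_le_mul_of_nonneg_right (hM _ (hσΩ t (Ioc_subset_Icc_self ht))) (norm_nonneg _)

lemma measurableSet_setOf_isCurveIn {Ωb : Set E2} (hΩb : IsClosed Ωb) :
    MeasurableSet {σ : Curves | IsCurveIn Ωb ⇑σ} := by
  have hLip : ∀ n : ℕ, IsClosed {σ : Curves | LipschitzOnWith (n : NNReal) (⇑σ) (Icc 0 1)} := by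
    intro n
    simp only [lipschitzOnWith_iff_dist_le_mul, ofPred_forall]
    exact isClosed_biInter fun s _ => isClosed_biInter fun t _ =>
      isClosed_le (by fun_prop) (by fun_prop)
  have hmem : IsClosed {σ : Curves | ∀ t ∈ Icc (0 : ℝ) 1, σ t ∈ Ωb} := by
    simp only [ofPred_forall]
    exact isClosed_biInter fun t _ => hΩb.preimage (continuous_eval_const t)
  have hset : {σ : Curves | IsCurveIn Ωb ⇑σ} =
      (⋃ n : ℕ, {σ : Curves | LipschitzOnWith (n : NNReal) (⇑σ) (Icc 0 1)}) ∩
        {σ : Curves | ∀ t ∈ Icc (0 : ℝ) 1, σ t ∈ Ωb} := by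
    ext σ
    simp only [IsCurveIn, mem_ofPred_eq, mem_inter_iff, mem_iUnion]
    refine and_congr_left fun _ =>
      ⟨fun ⟨K, hK⟩ => ⟨⌈(K : ℝ)⌉₊, hK.weaken ?_⟩, fun ⟨n, hn⟩ => ⟨n, hn⟩⟩
    exact_mod_cast Nat.le_ceil (K : ℝ)
  rw [hset]
  exact (MeasurableSet.iUnion fun n => (hLip n).measurableSet).inter hmem.measurableSet

lemma stronglyMeasurable_Lw (φ : C(E2, ℝ)) : StronglyMeasurable fun σ : Curves => Lw φ σ := by
  have hderiv : StronglyMeasurable fun p : Curves × ℝ => deriv p.1 p.2 :=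
    stronglyMeasurable_deriv_with_param (f := fun (σ : Curves) (t : ℝ) => σ t) continuous_eval
  have hprod : StronglyMeasurable fun p : Curves × ℝ => φ (p.1 p.2) * ‖deriv p.1 p.2‖ :=
    (φ.continuous.comp continuous_eval).stronglyMeasurable.mul hderiv.norm
  simpa only [Lw, intervalIntegral.integral_of_le zero_le_one] using
    hprod.integral_prod_right' (ν := volume.restrict (Ioc (0 : ℝ) 1))

lemma Lw_one (σ : ℝ → E2) : Lw (ContinuousMap.const E2 1) σ = len σ := by
  simp [Lw, len]

lemma integrable_Lw {K : Set E2} (hK : IsCompact K) {Q : Measure Curves}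
    (hQ : ∀ᵐ σ : Curves ∂Q, IsCurveIn K σ) (hlen : Integrable (fun σ : Curves => len σ) Q)
    (φ : C(E2, ℝ)) : Integrable (fun σ : Curves => Lw φ σ) Q := by
  obtain ⟨M, hM⟩ := hK.exists_bound_of_continuousOn φ.continuous.continuousOn
  refine Integrable.mono' (hlen.const_mul M) (stronglyMeasurable_Lw φ).aestronglyMeasurable ?_
  filter_upwards [hQ] with σ hσ
  exact hσ.abs_Lw_le hM

end Curves

section Admissible

variable {Ω : Set E2} {μ0 μ1 : Measure E2} {q : ℝ}

lemma InQq.memLp {Q : Measure Curves} {f : E2 → ℝ} (hQ : InQq Ω μ0 μ1 q Q f) :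
    MemLp f (ENNReal.ofReal q) (volume.restrict Ω) :=
  hQ.2.2.2.2.1

lemma InQq.ae_nonneg {Q : Measure Curves} {f : E2 → ℝ} (hQ : InQq Ω μ0 μ1 q Q f) :
    0 ≤ᵐ[volume.restrict Ω] f :=
  hQ.2.2.2.2.2.1

lemma InQq.ae_isCurveIn {Q : Measure Curves} {f : E2 → ℝ} (hQ : InQq Ω μ0 μ1 q Q f) :
    ∀ᵐ σ : Curves ∂Q, IsCurveIn (closure Ω) σ :=
  have := hQ.1
  (prob_compl_eq_zero_iff (measurableSet_setOf_isCurveIn isClosed_closure)).2 hQ.2.1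

lemma InQq.ae_eq_zero_of_not_integrable_len [IsFiniteMeasure (volume.restrict Ω)] (hq : 1 ≤ q)
    {Q : Measure Curves} {f : E2 → ℝ} (hQ : InQq Ω μ0 μ1 q Q f)
    (hlen : ¬ Integrable (fun σ : Curves => len σ) Q) : f =ᵐ[volume.restrict Ω] 0 := by
  have h := hQ.2.2.2.2.2.2 (ContinuousMap.const E2 1)
  simp only [Lw_one, integral_undef hlen, ContinuousMap.const_apply, one_mul] at h
  exact (integral_eq_zero_iff_of_nonneg_ae hQ.ae_nonneg
    (hQ.memLp.integrable (ENNReal.one_le_ofReal.2 hq))).1 h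

lemma InQq.integrable_mul (hΩ : IsCompact (closure Ω)) [IsFiniteMeasure (volume.restrict Ω)]
    (hq : 1 ≤ q) {Q : Measure Curves} {f : E2 → ℝ} (hQ : InQq Ω μ0 μ1 q Q f)
    (φ : C(E2, ℝ)) : Integrable (fun x => φ x * f x) (volume.restrict Ω) := by
  obtain ⟨M, hM⟩ := hΩ.exists_bound_of_continuousOn φ.continuous.continuousOn
  refine (hQ.memLp.integrable (ENNReal.one_le_ofReal.2 hq)).bdd_mul (c := M)
    φ.continuous.aestronglyMeasurable ?_
  filter_upwards [ae_restrict_of_ae_restrict_of_subset subset_closure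
    (ae_restrict_mem isClosed_closure.measurableSet)] with x hx
  exact hM x hx

lemma InQq.convexComb (hΩ : IsCompact (closure Ω)) [IsFiniteMeasure (volume.restrict Ω)]
    (hq : 1 ≤ q) {Q₀ Q₁ : Measure Curves} {f₀ f₁ : E2 → ℝ}
    (h₀ : InQq Ω μ0 μ1 q Q₀ f₀) (h₁ : InQq Ω μ0 μ1 q Q₁ f₁)
    (hlen₀ : Integrable (fun σ : Curves => len σ) Q₀)
    (hlen₁ : Integrable (fun σ : Curves => len σ) Q₁) {ε : ℝ} (hε : ε ∈ Icc 0 1) :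
    InQq Ω μ0 μ1 q (ENNReal.ofReal (1 - ε) • Q₀ + ENNReal.ofReal ε • Q₁)
      (fun x => (1 - ε) * f₀ x + ε * f₁ x) := by
  have hε' : 0 ≤ 1 - ε := sub_nonneg.2 hε.2
  have hone : ENNReal.ofReal (1 - ε) + ENNReal.ofReal ε = 1 := by
    rw [← ENNReal.ofReal_add hε' hε.1, sub_add_cancel, ENNReal.ofReal_one]
  have hmap : ∀ (t : ℝ) ν, Q₀.map (fun σ : Curves => σ t) = ν →
      Q₁.map (fun σ : Curves => σ t) = ν →
      (ENNReal.ofReal (1 - ε) • Q₀ + ENNReal.ofReal ε • Q₁).map (fun σ : Curves => σ t) = ν := by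
    intro t ν h₀ h₁
    rw [Measure.map_add _ _ (continuous_eval_const t).measurable, Measure.map_smul,
      Measure.map_smul, h₀, h₁, ← add_smul, hone, one_smul]
  have hφf₀ := h₀.integrable_mul hΩ hq
  have hφf₁ := h₁.integrable_mul hΩ hq
  have hLw₀ := integrable_Lw hΩ h₀.ae_isCurveIn hlen₀
  have hLw₁ := integrable_Lw hΩ h₁.ae_isCurveIn hlen₁
  obtain ⟨hP₀, hC₀, hs₀, ht₀, hL₀, hpos₀, hid₀⟩ := h₀
  obtain ⟨hP₁, hC₁, hs₁, ht₁, hL₁, hpos₁, hid₁⟩ := h₁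
  refine ⟨⟨?_⟩, ?_, hmap 0 μ0 hs₀ hs₁, hmap 1 μ1 ht₀ ht₁,
    (hL₀.const_mul _).add (hL₁.const_mul _), ?_, fun φ => ?_⟩
  · simp [measure_univ, hone]
  · simp [hC₀, hC₁, hone]
  · filter_upwards [hpos₀, hpos₁] with x hx₀ hx₁
    exact add_nonneg (mul_nonneg hε' hx₀) (mul_nonneg hε.1 hx₁)
  · calc ∫ x in Ω, φ x * ((1 - ε) * f₀ x + ε * f₁ x)
        = ∫ x in Ω, (1 - ε) * (φ x * f₀ x) + ε * (φ x * f₁ x) := by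
          congr 1; ext x; ring
      _ = (1 - ε) * ∫ σ, Lw φ σ ∂Q₀ + ε * ∫ σ, Lw φ σ ∂Q₁ := by
          rw [integral_add ((hφf₀ φ).const_mul _) ((hφf₁ φ).const_mul _), integral_const_mul,
            integral_const_mul, hid₀, hid₁]
      _ = ∫ σ, Lw φ σ ∂(ENNReal.ofReal (1 - ε) • Q₀ + ENNReal.ofReal ε • Q₁) := by
          rw [integral_add_measure ((hLw₀ φ).smul_measure ENNReal.ofReal_ne_top)
            ((hLw₁ φ).smul_measure ENNReal.ofReal_ne_top), integral_smul_measure,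
            integral_smul_measure, ENNReal.toReal_ofReal hε', ENNReal.toReal_ofReal hε.1,
            smul_eq_mul, smul_eq_mul]

end Admissible

theorem congested_transport_optimality_condition_general
    (Ω : Set E2) (hΩb : Bornology.IsBounded Ω)
    (μ0 μ1 : Measure E2)
    (q a b c : ℝ) (hq : 1 < q) (ha : 0 < a)
    (H : ℝ → ℝ) (hHconv : ConvexOn ℝ (Ici 0) H)
    (hH0 : H 0 = 0) (hHdiff : ∀ z : ℝ, 0 ≤ z → DifferentiableAt ℝ H z)
    (hgrowth : ∀ z : ℝ, 0 ≤ z → a * z ^ q ≤ H z ∧ H z ≤ b * (z ^ q + 1))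
    (hderiv : ∀ z : ℝ, 0 ≤ z → 0 ≤ deriv H z ∧ deriv H z ≤ c * (z ^ (q - 1) + 1))
    (Qbar : Measure Curves) (fbar : E2 → ℝ) (hQbar : InQq Ω μ0 μ1 q Qbar fbar) :
    (∀ (Q : Measure Curves) (f : E2 → ℝ), InQq Ω μ0 μ1 q Q f →
        ∫ x in Ω, H (fbar x) ≤ ∫ x in Ω, H (f x)) ↔
    (∀ (Q : Measure Curves) (f : E2 → ℝ), InQq Ω μ0 μ1 q Q f →
        ∫ x in Ω, deriv H (fbar x) * fbar x ≤ ∫ x in Ω, deriv H (fbar x) * f x) := by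
  have : IsFiniteMeasure (volume.restrict Ω) := isFiniteMeasure_restrict.2 hΩb.measure_lt_top.ne
  have hHnorm : ∀ z, 0 ≤ z → ‖H z‖ ≤ b * (z ^ q + 1) := fun z hz => by
    rw [Real.norm_of_nonneg ((mul_nonneg ha.le (Real.rpow_nonneg hz q)).trans (hgrowth z hz).1)]
    exact (hgrowth z hz).2
  have hHf : ∀ {Q f}, InQq Ω μ0 μ1 q Q f → Integrable (fun x => H (f x)) (volume.restrict Ω) :=
    fun hQ => integrable_comp_of_norm_le_rpow (by linarith)
      (fun z hz => (hHdiff z hz).continuousAt.continuousWithinAt) hHnorm hQ.memLp hQ.ae_nonneg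
  have hbar' := integrable_deriv_comp_mul_self hq hderiv hQbar.memLp hQbar.ae_nonneg
  have hf' : ∀ {Q f}, InQq Ω μ0 μ1 q Q f →
      Integrable (fun x => deriv H (fbar x) * f x) (volume.restrict Ω) :=
    fun hQ => integrable_deriv_comp_mul hHconv hHdiff (fun z hz => (hderiv z hz).1)
      hQbar.ae_nonneg hQ.ae_nonneg hQbar.memLp.1.aemeasurable hQ.memLp.1 (hHf hQbar) (hHf hQ) hbar'
  refine ⟨fun hmin Q f hQ => ?_, fun hVI Q f hQ => integral_le_of_integral_deriv_mul_le hHconv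
    hHdiff hQbar.ae_nonneg hQ.ae_nonneg (hHf hQbar) (hHf hQ) hbar' (hf' hQ) (hVI Q f hQ)⟩
  by_cases hbar0 : fbar =ᵐ[volume.restrict Ω] 0
  · exact integral_deriv_mul_le_of_ae_eq_zero (hderiv 0 le_rfl).1 hbar0 hQ.ae_nonneg
  have hlen_bar : Integrable (fun σ : Curves => len σ) Qbar := by
    by_contra h
    exact hbar0 (hQbar.ae_eq_zero_of_not_integrable_len hq.le h)
  have hlen : Integrable (fun σ : Curves => len σ) Q := by
    by_contra h
    exact hbar0 (ae_eq_zero_of_integral_comp_le ha (fun z hz => (hgrowth z hz).1) hH0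
      hQbar.ae_nonneg (hHf hQbar) (hQ.ae_eq_zero_of_not_integrable_len hq.le h) (hmin Q f hQ))
  have hcomb := fun ε (hε : ε ∈ Icc (0 : ℝ) 1) =>
    hQbar.convexComb hΩb.isCompact_closure hq.le hQ hlen_bar hlen hε
  exact integral_deriv_mul_le_of_forall_integral_le hHconv hHdiff hQbar.ae_nonneg hQ.ae_nonneg
    (fun ε hε => hHf (hcomb ε hε)) hbar' (hf' hQ)
    (fun ε hε => hmin _ _ (hcomb ε (Ioc_subset_Icc_self hε)))

/-- variational characterization of minimizers of the congested problem. -/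
theorem congested_transport_optimality_condition
    (Ω : Set E2) (hΩo : IsOpen Ω) (hΩb : Bornology.IsBounded Ω) (hΩconv : Convex ℝ Ω)
    (μ0 μ1 : Measure E2) (h0 : IsProbabilityMeasure μ0) (h1 : IsProbabilityMeasure μ1)
    (q a b c : ℝ) (hq : 1 < q) (ha : 0 < a) (hb : 0 < b) (hc : 0 < c)
    (H : ℝ → ℝ) (hHconv : ConvexOn ℝ (Ici 0) H) (hHmono : MonotoneOn H (Ici 0))
    (hH0 : H 0 = 0) (hHdiff : ∀ z : ℝ, 0 ≤ z → DifferentiableAt ℝ H z)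
    (hgrowth : ∀ z : ℝ, 0 ≤ z → a * z ^ q ≤ H z ∧ H z ≤ b * (z ^ q + 1))
    (hderiv : ∀ z : ℝ, 0 ≤ z → 0 ≤ deriv H z ∧ deriv H z ≤ c * (z ^ (q - 1) + 1))
    (Qbar : Measure Curves) (fbar : E2 → ℝ) (hQbar : InQq Ω μ0 μ1 q Qbar fbar) :
    (∀ (Q : Measure Curves) (f : E2 → ℝ), InQq Ω μ0 μ1 q Q f →
        ∫ x in Ω, H (fbar x) ≤ ∫ x in Ω, H (f x)) ↔
    (∀ (Q : Measure Curves) (f : E2 → ℝ), InQq Ω μ0 μ1 q Q f →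
        ∫ x in Ω, deriv H (fbar x) * fbar x ≤ ∫ x in Ω, deriv H (fbar x) * f x) :=
  congested_transport_optimality_condition_general Ω hΩb μ0 μ1 q a b c hq ha H hHconv hH0 hHdiff
    hgrowth hderiv Qbar fbar hQbar
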